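/- arXiv:1410.7253 — 3 statements merged into one kernel-verified Lean document; each statement's English description precedes it below -/
import Mathlib

section
/- For all δ > 0 there exist constants c ∈ ℕ and a prime p₀ such that for all integers r ≥ c, all primes p ≥ max(p₀, c^{r/δ}), and all m ∈ ℕ, the following holds with s = ⌊p^{δ/r}⌋: there exists a function Ext : ℤ_p → {0,1}^m such that for every proper (r, s)-GAP X in ℤ_p, the statistical distance between Ext(X) and the uniform distribution U_m on {0,1}^m is at most (3r/p^{0.9δ/r} + p^{-1/2})·2^{m/2}·log₂ p. -/
open Finset Pointwise

/-- Statistical distance between the distribution of `F` applied to a uniform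
element of the finite set `X` and the uniform distribution on `β`. -/
noncomputable def statDist {α β : Type*} [Fintype β] [DecidableEq β]
    (X : Finset α) (F : α → β) : ℝ :=
  (1/2) * ∑ y : β, |((X.filter (fun x => F x = y)).card : ℝ) / (X.card : ℝ)
    - 1 / (Fintype.card β : ℝ)|

/-- `X` is a proper `(r,s)`-GAP: it consists of the sums
`b₀ + a₁b₁ + ⋯ + a_r b_r` with `0 ≤ a_i ≤ s-1`, and all `s^r` sums are distinct. -/
def IsProperGAP {G : Type*} [AddCommGroup G] (r s : ℕ) (X : Finset G) : Prop :=
  (∃ b0 : G, ∃ b : Fin r → G,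
    (X : Set G) = {x | ∃ a : Fin r → ℕ, (∀ i, a i < s) ∧ x = b0 + ∑ i, a i • b i}) ∧
  X.card = s ^ r

section Aux

lemma exp_le_quad {x : ℝ} (h0 : 0 ≤ x) (h1 : x ≤ 1) : Real.exp x ≤ 1 + x + x^2 := by
  have h := Real.exp_bound (x := x) (by rwa [abs_of_nonneg h0]) (n := 2) (by norm_num)
  rw [abs_of_nonneg h0] at h
  have h2 : Real.exp x ≤ x ^ 2 * (3 / (2*2)) + (1 + x) := by
    simpa [Finset.sum_range_succ] using (abs_le.mp h).2
  nlinarith [sq_nonneg x]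

lemma aux_rL {z K : ℝ} (hz : 8 ≤ z) (hK : 0 ≤ K) : 8*z*K ≤ 9*(z*z)*K := by
  nlinarith [mul_nonneg (mul_nonneg (show (0:ℝ) ≤ z by linarith) hK)
    (show (0:ℝ) ≤ 9*z - 8 by linarith)]

lemma le_of_sq_le' {x y : ℝ} (hx : 0 ≤ x) (hy : 0 ≤ y) (h : x^2 ≤ y^2) : x ≤ y := by
  nlinarith [sq_nonneg (x - y), sq_nonneg (x + y)]

variable {α β : Type*} [Fintype β] [DecidableEq β]

lemma sum_fiber_card (X : Finset α) (F : α → β) :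
    ∑ y : β, ((X.filter fun x => F x = y).card : ℝ) = (X.card : ℝ) := by
  exact_mod_cast congrArg (Nat.cast : ℕ → ℝ)
    (Finset.card_eq_sum_card_fiberwise (fun x _ => Finset.mem_univ (F x))).symm

lemma sum_P_le_one (X : Finset α) (F : α → β) :
    ∑ y : β, ((X.filter fun x => F x = y).card : ℝ) / (X.card : ℝ) ≤ 1 := by
  rw [← Finset.sum_div, sum_fiber_card]
  rcases eq_or_ne (X.card : ℝ) 0 with h | h
  · simp [h]
  · rw [div_self h]

lemma statDist_le_one [Nonempty β] (X : Finset α) (F : α → β) : statDist X F ≤ 1 := by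
  have hN : (0:ℝ) < (Fintype.card β : ℝ) := by exact_mod_cast Fintype.card_pos
  have h : ∑ y : β, |((X.filter (fun x => F x = y)).card : ℝ) / (X.card : ℝ)
      - 1 / (Fintype.card β : ℝ)| ≤ 2 := by
    calc ∑ y : β, |((X.filter (fun x => F x = y)).card : ℝ) / (X.card : ℝ)
        - 1 / (Fintype.card β : ℝ)|
        ≤ ∑ y : β, (((X.filter (fun x => F x = y)).card : ℝ) / (X.card : ℝ)
          + 1 / (Fintype.card β : ℝ)) := by
          apply Finset.sum_le_sum
          intro y _
          have h1 : (0:ℝ) ≤ ((X.filter (fun x => F x = y)).card : ℝ) / (X.card : ℝ) := by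
            positivity
          have h2 : (0:ℝ) ≤ 1 / (Fintype.card β : ℝ) := by positivity
          rw [abs_le]
          constructor <;> [linarith; linarith]
      _ = (∑ y : β, ((X.filter (fun x => F x = y)).card : ℝ) / (X.card : ℝ)) + 1 := by
          rw [Finset.sum_add_distrib, Finset.sum_const, nsmul_eq_mul, Finset.card_univ]
          rw [mul_one_div, div_self hN.ne']
      _ ≤ 2 := by have := sum_P_le_one X F; linarith
  rw [statDist]; linarith

lemma statDist_eq_posPart [Nonempty β] (X : Finset α) (F : α → β) (hX : X.card ≠ 0) :
    statDist X F = ∑ y : β, max (((X.filter (fun x => F x = y)).card : ℝ) / (X.card : ℝ)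
      - 1 / (Fintype.card β : ℝ)) 0 := by
  have hN : (0:ℝ) < (Fintype.card β : ℝ) := by exact_mod_cast Fintype.card_pos
  have hK : ((X.card : ℝ)) ≠ 0 := by exact_mod_cast hX
  have hzero : ∑ y : β, (((X.filter (fun x => F x = y)).card : ℝ) / (X.card : ℝ)
      - 1 / (Fintype.card β : ℝ)) = 0 := by
    rw [Finset.sum_sub_distrib, ← Finset.sum_div, sum_fiber_card, div_self hK,
      Finset.sum_const, nsmul_eq_mul, Finset.card_univ, mul_one_div, div_self hN.ne']
    ring
  have habs : ∀ a : ℝ, |a| = 2 * max a 0 - a := by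
    intro a
    rcases le_total a 0 with h | h
    · rw [abs_of_nonpos h, max_eq_right h]; ring
    · rw [abs_of_nonneg h, max_eq_left h]; ring
  rw [statDist, Finset.sum_congr rfl (fun y _ => habs _), Finset.sum_sub_distrib, hzero,
    ← Finset.mul_sum]
  ring

variable [Fintype α] [DecidableEq α]

lemma mgf_eq (X : Finset α) (y : β) (lam : ℝ) :
    ∑ f : α → β, Real.exp (lam * ((X.filter fun x => f x = y).card : ℝ))
      = ((Fintype.card β : ℝ) - 1 + Real.exp lam) ^ X.card
        * (Fintype.card β : ℝ) ^ (Fintype.card α - X.card) := by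
  have hpt : ∀ f : α → β, Real.exp (lam * ((X.filter fun x => f x = y).card : ℝ))
      = ∏ i : α, (if i ∈ X then (if f i = y then Real.exp lam else 1) else 1) := by
    intro f
    rw [← Finset.prod_subset (Finset.subset_univ X) (by intro i _ hi; simp [hi])]
    rw [Finset.prod_congr rfl (fun i hi => if_pos hi), Finset.prod_ite, Finset.prod_const,
      Finset.prod_const, one_pow, mul_one, mul_comm lam, Real.exp_nat_mul]
  rw [Finset.sum_congr rfl (fun f _ => hpt f)]
  have swap : ∑ f : α → β, ∏ i : α, (if i ∈ X then (if f i = y then Real.exp lam else 1) else 1)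
      = ∏ i : α, ∑ z : β, (if i ∈ X then (if z = y then Real.exp lam else 1) else 1) := by
    rw [Finset.prod_univ_sum]
    rw [← Fintype.piFinset_univ]
  rw [swap]
  have hz : ∀ i : α, (∑ z : β, (if i ∈ X then (if z = y then Real.exp lam else 1) else 1))
      = if i ∈ X then ((Fintype.card β : ℝ) - 1 + Real.exp lam) else (Fintype.card β : ℝ) := by
    intro i
    by_cases hi : i ∈ X <;> simp only [hi, if_true, if_false]
    · have : ∀ z : β, (if z = y then Real.exp lam else 1)
          = 1 + (if z = y then Real.exp lam - 1 else 0) := by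
        intro z; split_ifs <;> ring
      rw [Finset.sum_congr rfl (fun z _ => this z), Finset.sum_add_distrib,
        Finset.sum_const, Finset.sum_ite_eq' Finset.univ y (fun _ => Real.exp lam - 1)]
      simp [Finset.card_univ]; ring
    · simp [Finset.card_univ]
  rw [Finset.prod_congr rfl (fun i _ => hz i), Finset.prod_ite, Finset.prod_const,
    Finset.prod_const]
  congr 2
  · exact congrArg Finset.card (by ext i; simp)
  · rw [show (Finset.univ.filter (fun i => ¬ i ∈ X)) = Xᶜ by ext i; simp [Finset.mem_compl],
      Finset.card_compl]

lemma chernoff_card [Nonempty β] (X : Finset α) (y : β) {lam j : ℝ}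
    (hl0 : 0 ≤ lam) (hl1 : lam ≤ 1) :
    ((Finset.univ.filter
        (fun f : α → β => j ≤ ((X.filter fun x => f x = y).card : ℝ))).card : ℝ)
      ≤ Real.exp ((X.card : ℝ) * (lam + lam^2) / (Fintype.card β : ℝ) - lam * j)
          * (Fintype.card β : ℝ) ^ (Fintype.card α) := by
  set N : ℝ := (Fintype.card β : ℝ) with hN
  have hN1 : (1:ℝ) ≤ N := by
    have : 1 ≤ Fintype.card β := Fintype.card_pos
    rw [hN]; exact_mod_cast this
  have hN0 : (0:ℝ) < N := lt_of_lt_of_le one_pos hN1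
  set Bad := Finset.univ.filter
      (fun f : α → β => j ≤ ((X.filter fun x => f x = y).card : ℝ)) with hBad
  have step1 : (Bad.card : ℝ) * Real.exp (lam * j)
      ≤ ∑ f : α → β, Real.exp (lam * ((X.filter fun x => f x = y).card : ℝ)) := by
    calc (Bad.card : ℝ) * Real.exp (lam * j)
        = ∑ _f ∈ Bad, Real.exp (lam * j) := by rw [Finset.sum_const, nsmul_eq_mul]
      _ ≤ ∑ f ∈ Bad, Real.exp (lam * ((X.filter fun x => f x = y).card : ℝ)) := by
          apply Finset.sum_le_sum
          intro f hf
          exact Real.exp_le_exp.mpr (mul_le_mul_of_nonneg_left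
            (Finset.mem_filter.mp hf).2 hl0)
      _ ≤ ∑ f : α → β, Real.exp (lam * ((X.filter fun x => f x = y).card : ℝ)) :=
          Finset.sum_le_sum_of_subset_of_nonneg (Finset.subset_univ _)
            (fun _ _ _ => (Real.exp_pos _).le)
  rw [mgf_eq X y lam] at step1
  have hb : (N - 1 + Real.exp lam) ^ X.card
      ≤ (N * Real.exp ((lam + lam^2)/N)) ^ X.card := by
    apply pow_le_pow_left₀ (by have := Real.exp_pos lam; linarith)
    have h1 : N - 1 + Real.exp lam ≤ N + (lam + lam^2) := by
      have := exp_le_quad hl0 hl1; linarith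
    have h2 : N + (lam + lam^2) = N * (1 + (lam + lam^2)/N) := by
      field_simp
    have h3 : 1 + (lam + lam^2)/N ≤ Real.exp ((lam + lam^2)/N) := by
      have := Real.add_one_le_exp ((lam + lam^2)/N); linarith
    calc N - 1 + Real.exp lam ≤ N * (1 + (lam + lam^2)/N) := by rw [← h2]; exact h1
      _ ≤ N * Real.exp ((lam + lam^2)/N) := by
          exact mul_le_mul_of_nonneg_left h3 hN0.le
  have hcard : X.card ≤ Fintype.card α := Finset.card_le_univ X
  have hmain : (Bad.card : ℝ) * Real.exp (lam * j)
      ≤ Real.exp ((X.card : ℝ) * (lam + lam^2) / N) * N ^ (Fintype.card α) := by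
    calc (Bad.card : ℝ) * Real.exp (lam * j)
        ≤ (N - 1 + Real.exp lam) ^ X.card * N ^ (Fintype.card α - X.card) := step1
      _ ≤ (N * Real.exp ((lam + lam^2)/N)) ^ X.card * N ^ (Fintype.card α - X.card) := by
          apply mul_le_mul_of_nonneg_right hb (by positivity)
      _ = Real.exp ((X.card : ℝ) * (lam + lam^2) / N) * N ^ (Fintype.card α) := by
          rw [mul_pow, ← Real.exp_nat_mul, mul_comm (N ^ X.card) _, mul_assoc,
            ← pow_add, Nat.add_sub_cancel' hcard]
          congr 2
          ring
  rw [Real.exp_sub, div_mul_eq_mul_div, le_div_iff₀ (Real.exp_pos _)]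
  exact hmain

lemma exists_good_ext [Nonempty β] {I : Type*} [Fintype I]
    (X : I → Finset α) (K : ℕ) (hK : 0 < K) (kk : ℝ) (hkk : 0 < kk)
    (hsmall : 4 * kk ≤ (K : ℝ) / (Fintype.card β : ℝ))
    (hunion : (Fintype.card I : ℝ) * (Fintype.card β : ℝ) * Real.exp (-kk) < 1) :
    ∃ f : α → β, ∀ i, (X i).card = K → ∀ y : β,
      (((X i).filter fun x => f x = y).card : ℝ)
        ≤ (K : ℝ) / (Fintype.card β : ℝ) + 2 * Real.sqrt (kk * K / (Fintype.card β : ℝ)) := by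
  set N : ℝ := (Fintype.card β : ℝ) with hNdef
  have hN0 : (0:ℝ) < N := by rw [hNdef]; exact_mod_cast Fintype.card_pos
  have hK0 : (0:ℝ) < (K:ℝ) := by exact_mod_cast hK
  set t : ℝ := 2 * Real.sqrt (kk * K / N) with ht
  set lam : ℝ := Real.sqrt (kk * N / K) with hlam
  have hlam0 : 0 ≤ lam := Real.sqrt_nonneg _
  have hlamsq : lam ^ 2 = kk * N / K := Real.sq_sqrt (by positivity)
  have hlam1 : lam ≤ 1 := by
    rw [hlam]
    apply Real.sqrt_le_one.mpr
    rw [div_le_one hK0]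
    have h4 : 4 * kk * N ≤ (K:ℝ) := by
      have := (le_div_iff₀ hN0).mp hsmall
      linarith
    nlinarith
  have hlamt : lam * t = 2 * kk := by
    rw [ht, hlam, ← mul_assoc, mul_comm (Real.sqrt _) 2, mul_assoc,
      ← Real.sqrt_mul (by positivity)]
    have : kk * N / K * (kk * (K:ℝ) / N) = kk ^ 2 := by field_simp
    rw [this, Real.sqrt_sq hkk.le]
  have hexp : ∀ (j : ℝ), j = (K:ℝ)/N + t →
      (K : ℝ) * (lam + lam^2) / N - lam * j = -kk := by
    intro j hj
    subst hj
    have h1 : (K:ℝ) * lam^2 / N = kk := by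
      rw [hlamsq]; field_simp
    linear_combination h1 - hlamt
  by_contra hcon
  push_neg at hcon
  have hcover : (Finset.univ : Finset (α → β)) ⊆
      (Finset.univ : Finset (I × β)).biUnion (fun z =>
        Finset.univ.filter (fun f : α → β => (X z.1).card = K ∧
          (K:ℝ)/N + t ≤ (((X z.1).filter fun x => f x = z.2).card : ℝ))) := by
    intro f _
    obtain ⟨i, hiK, y, hy⟩ := hcon f
    exact Finset.mem_biUnion.mpr ⟨(i, y), Finset.mem_univ _,
      Finset.mem_filter.mpr ⟨Finset.mem_univ _, hiK, hy.le⟩⟩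
  have hcardle := Finset.card_le_card hcover
  have hsum := Finset.card_biUnion_le (s := (Finset.univ : Finset (I × β)))
    (t := fun z => Finset.univ.filter (fun f : α → β => (X z.1).card = K ∧
      (K:ℝ)/N + t ≤ (((X z.1).filter fun x => f x = z.2).card : ℝ)))
  have hbadcard : ∀ z : I × β,
      ((Finset.univ.filter (fun f : α → β => (X z.1).card = K ∧
        (K:ℝ)/N + t ≤ (((X z.1).filter fun x => f x = z.2).card : ℝ))).card : ℝ)
      ≤ Real.exp (-kk) * N ^ (Fintype.card α) := by
    intro z
    by_cases hzK : (X z.1).card = K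
    · calc ((Finset.univ.filter (fun f : α → β => (X z.1).card = K ∧
          (K:ℝ)/N + t ≤ (((X z.1).filter fun x => f x = z.2).card : ℝ))).card : ℝ)
          ≤ ((Finset.univ.filter (fun f : α → β =>
            (K:ℝ)/N + t ≤ (((X z.1).filter fun x => f x = z.2).card : ℝ))).card : ℝ) := by
            apply Nat.cast_le.mpr
            apply Finset.card_le_card
            intro f hf
            rw [Finset.mem_filter] at hf ⊢
            exact ⟨hf.1, hf.2.2⟩
        _ ≤ Real.exp ((X z.1).card * (lam + lam^2) / N - lam * ((K:ℝ)/N + t))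
              * N ^ (Fintype.card α) := chernoff_card (X z.1) z.2 hlam0 hlam1
        _ = Real.exp (-kk) * N ^ (Fintype.card α) := by
            rw [hzK, hexp _ rfl]
    · have hemp : (Finset.univ.filter (fun f : α → β => (X z.1).card = K ∧
          (K:ℝ)/N + t ≤ (((X z.1).filter fun x => f x = z.2).card : ℝ))) = ∅ := by
        apply Finset.filter_false_of_mem
        intro f _
        rintro ⟨h1, -⟩
        exact hzK h1
      rw [hemp]
      simp only [Finset.card_empty, Nat.cast_zero]
      positivity
  have hcardΩ : (Fintype.card (α → β) : ℝ) = N ^ (Fintype.card α) := by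
    rw [hNdef]
    exact_mod_cast congrArg (Nat.cast : ℕ → ℝ) (Fintype.card_fun)
  have hfinal : (N : ℝ) ^ (Fintype.card α)
      ≤ (Fintype.card I : ℝ) * N * (Real.exp (-kk) * N ^ (Fintype.card α)) := by
    calc (N : ℝ) ^ (Fintype.card α) = (Fintype.card (α → β) : ℝ) := hcardΩ.symm
      _ = ((Finset.univ : Finset (α → β)).card : ℝ) := by rw [Finset.card_univ]
      _ ≤ (((Finset.univ : Finset (I × β)).biUnion _).card : ℝ) := by exact_mod_cast hcardle
      _ ≤ ∑ z : I × β, ((Finset.univ.filter (fun f : α → β => (X z.1).card = K ∧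
            (K:ℝ)/N + t ≤ (((X z.1).filter fun x => f x = z.2).card : ℝ))).card : ℝ) := by
          exact_mod_cast hsum
      _ ≤ ∑ _z : I × β, Real.exp (-kk) * N ^ (Fintype.card α) :=
          Finset.sum_le_sum (fun z _ => hbadcard z)
      _ = (Fintype.card I : ℝ) * N * (Real.exp (-kk) * N ^ (Fintype.card α)) := by
          rw [Finset.sum_const, nsmul_eq_mul, Finset.card_univ, Fintype.card_prod]
          push_cast
          ring
  have hpow : (0:ℝ) < N ^ (Fintype.card α) := by positivity
  nlinarith [hfinal, hunion, hpow]

lemma gap_eq_image {G : Type*} [AddCommGroup G] [DecidableEq G] (r s : ℕ) (b0 : G)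
    (b : Fin r → G) (X : Finset G)
    (h : (X : Set G) = {x | ∃ a : Fin r → ℕ, (∀ i, a i < s) ∧ x = b0 + ∑ i, a i • b i}) :
    X = Finset.image (fun a : Fin r → Fin s => b0 + ∑ i, (a i : ℕ) • b i) Finset.univ := by
  apply Finset.coe_injective
  rw [h, Finset.coe_image, Finset.coe_univ, Set.image_univ]
  ext x
  constructor
  · rintro ⟨a, ha, rfl⟩
    exact ⟨fun i => ⟨a i, ha i⟩, rfl⟩
  · rintro ⟨a, rfl⟩
    exact ⟨fun i => (a i : ℕ), fun i => (a i).2, rfl⟩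

end Aux

set_option maxHeartbeats 1000000 in
theorem stmt_1 :
    ∀ δ > (0:ℝ), ∃ c : ℕ, 0 < c ∧ ∃ p₀ : ℕ, p₀.Prime ∧
      ∀ r : ℕ, c ≤ r → ∀ p : ℕ, p.Prime →
        (p₀ : ℝ) ≤ (p : ℝ) → (c : ℝ) ^ ((r : ℝ)/δ) ≤ (p : ℝ) → ∀ m : ℕ,
          ∃ Ext : ZMod p → (Fin m → Bool),
            ∀ X : Finset (ZMod p), IsProperGAP r ⌊(p:ℝ) ^ (δ/(r:ℝ))⌋₊ X →
              statDist X Ext ≤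
                (3*(r:ℝ)/(p:ℝ)^(0.9*δ/(r:ℝ)) + (p:ℝ)^(-(1:ℝ)/2))
                  * (2:ℝ)^((m:ℝ)/2) * Real.logb 2 p := by
  intro δ hδ
  refine ⟨8, by norm_num, 3, by norm_num, ?_⟩
  intro r hr p hp hp3 hcp m
  haveI : NeZero p := ⟨hp.pos.ne'⟩
  have hp0 : (0:ℝ) < p := by exact_mod_cast hp.pos
  have hp1 : (1:ℝ) ≤ p := by exact_mod_cast hp.one_lt.le
  have hp2 : (2:ℝ) ≤ p := by exact_mod_cast hp.two_le
  have hp3' : (3:ℝ) ≤ p := by exact_mod_cast hp3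
  have hr8 : (8:ℝ) ≤ (r:ℝ) := by exact_mod_cast hr
  have hr0 : (0:ℝ) < (r:ℝ) := by linarith
  have hcp' : (8:ℝ) ^ ((r:ℝ)/δ) ≤ (p:ℝ) := by exact_mod_cast hcp
  -- log facts
  have hlog2pos : (0:ℝ) < Real.log 2 := Real.log_pos (by norm_num)
  have hlogppos : (0:ℝ) < Real.log p := Real.log_pos (by linarith)
  have hlogp1 : (1:ℝ) ≤ Real.log p := by
    have h1 : Real.exp 1 ≤ (p:ℝ) := le_trans (le_of_lt Real.exp_one_lt_d9) (by linarith)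
    calc (1:ℝ) = Real.log (Real.exp 1) := (Real.log_exp 1).symm
      _ ≤ Real.log p := Real.log_le_log (Real.exp_pos 1) h1
  set L : ℝ := Real.logb 2 p with hLdef
  have hL1 : (1:ℝ) ≤ L := by
    rw [hLdef, Real.logb, le_div_iff₀ hlog2pos, one_mul]
    exact Real.log_le_log (by norm_num) hp2
  have hlogpL : Real.log p ≤ L := by
    rw [hLdef, Real.logb, le_div_iff₀ hlog2pos]
    nlinarith [Real.log_two_lt_d9]
  -- the GAP parameters
  set u : ℝ := (p:ℝ) ^ (δ/(r:ℝ)) with hu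
  have hu0 : 0 < u := Real.rpow_pos_of_pos hp0 _
  have hu8 : (8:ℝ) ≤ u := by
    have h1 : ((8:ℝ) ^ ((r:ℝ)/δ)) ^ (δ/(r:ℝ)) ≤ (p:ℝ) ^ (δ/(r:ℝ)) :=
      Real.rpow_le_rpow (by positivity) hcp' (by positivity)
    have h2 : ((r:ℝ)/δ) * (δ/(r:ℝ)) = 1 := by field_simp
    rwa [← Real.rpow_mul (by norm_num), h2, Real.rpow_one] at h1
  set s : ℕ := ⌊u⌋₊ with hs
  have hs8 : 8 ≤ s := Nat.le_floor (by exact_mod_cast hu8)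
  have hsu : (s:ℝ) ≤ u := Nat.floor_le hu0.le
  have hs_lb : u * (7/8) ≤ (s:ℝ) := by
    have h := Nat.sub_one_lt_floor u
    have : u - 1 < (s:ℝ) := by exact_mod_cast h
    linarith
  set K : ℕ := s ^ r with hK
  have hK0 : 0 < K := Nat.pow_pos (by omega)
  have hK0R : (0:ℝ) < (K:ℝ) := by exact_mod_cast hK0
  have hKR : (K:ℝ) = ((s:ℝ))^r := by rw [hK]; push_cast; ring
  -- lower bound on K
  have hur : u ^ (r:ℕ) = (p:ℝ) ^ δ := by
    rw [hu, ← Real.rpow_natCast ((p:ℝ) ^ (δ/(r:ℝ))) r, ← Real.rpow_mul hp0.le]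
    congr 1
    field_simp
  have h78 : Real.exp (-(1/4)) ≤ 7/8 := by
    rw [Real.exp_neg]
    have he : Real.exp (1/4) * (Real.exp (1/4))⁻¹ = 1 := mul_inv_cancel₀ (Real.exp_pos _).ne'
    nlinarith [Real.add_one_le_exp (1/4:ℝ), Real.exp_pos (1/4:ℝ)]
  have hexp78 : Real.exp (-(r:ℝ)/4) ≤ (7/8:ℝ)^(r:ℕ) := by
    calc Real.exp (-(r:ℝ)/4) = (Real.exp (-(1/4)))^(r:ℕ) := by
          rw [← Real.exp_nat_mul]; congr 1; ring
      _ ≤ (7/8:ℝ)^(r:ℕ) := pow_le_pow_left₀ (Real.exp_pos _).le h78 r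
  have hrlog : (r:ℝ) ≤ δ * Real.log p / 2 := by
    have hlog8 : (2:ℝ) ≤ Real.log 8 := by
      have h8 : (8:ℝ) = 2^(3:ℕ) := by norm_num
      rw [h8, Real.log_pow]
      push_cast
      nlinarith [Real.log_two_gt_d9]
    have h := Real.log_le_log (by positivity) hcp'
    rw [Real.log_rpow (by norm_num)] at h
    have hrd : 0 ≤ (r:ℝ)/δ := by positivity
    have h2 : (r:ℝ)/δ * 2 ≤ Real.log p :=
      le_trans (mul_le_mul_of_nonneg_left hlog8 hrd) h
    have h3 : ((r:ℝ)/δ * 2) * δ ≤ Real.log p * δ := mul_le_mul_of_nonneg_right h2 hδ.le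
    have h4 : ((r:ℝ)/δ * 2) * δ = 2 * r := by field_simp
    linarith
  have hexp2 : (p:ℝ) ^ (-(δ/8)) ≤ Real.exp (-(r:ℝ)/4) := by
    rw [Real.rpow_def_of_pos hp0]
    apply Real.exp_le_exp.mpr
    linarith [hrlog]
  have hKlow : (p:ℝ) ^ (δ - δ/8) ≤ (K:ℝ) := by
    have e1 : (p:ℝ) ^ (δ - δ/8) = (p:ℝ) ^ (-(δ/8)) * (p:ℝ) ^ δ := by
      rw [← Real.rpow_add hp0]; congr 1; ring
    have e2 : (p:ℝ) ^ (-(δ/8)) * (p:ℝ) ^ δ ≤ (7/8:ℝ)^(r:ℕ) * u^(r:ℕ) := by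
      rw [← hur]
      apply mul_le_mul_of_nonneg_right (le_trans hexp2 hexp78) (by positivity)
    have e3 : (7/8:ℝ)^(r:ℕ) * u^(r:ℕ) = (u * (7/8))^(r:ℕ) := by
      rw [mul_pow]; ring
    have e4 : (u * (7/8))^(r:ℕ) ≤ ((s:ℝ))^(r:ℕ) :=
      pow_le_pow_left₀ (by positivity) hs_lb r
    rw [e1, hKR]
    calc (p:ℝ) ^ (-(δ/8)) * (p:ℝ) ^ δ ≤ (u * (7/8))^(r:ℕ) := by rw [← e3]; exact e2
      _ ≤ ((s:ℝ))^r := e4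
  -- A and its bound
  set A : ℝ := (p:ℝ) ^ (0.9*δ/(r:ℝ)) with hA
  have hA0 : 0 < A := Real.rpow_pos_of_pos hp0 _
  have hAA : A * A ≤ (K:ℝ) := by
    have e1 : A * A = (p:ℝ) ^ (0.9*δ/(r:ℝ) + 0.9*δ/(r:ℝ)) := by
      rw [hA, ← Real.rpow_add hp0]
    have e2 : (p:ℝ) ^ (0.9*δ/(r:ℝ) + 0.9*δ/(r:ℝ)) ≤ (p:ℝ) ^ (δ - δ/8) := by
      apply Real.rpow_le_rpow_of_exponent_le hp1
      rw [← add_div, div_le_iff₀ hr0]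
      linarith [mul_le_mul_of_nonneg_left hr8 hδ.le]
    rw [e1]
    exact le_trans e2 hKlow
  -- other quantities
  set kk : ℝ := ((r:ℝ)+1) * Real.log p + (m:ℝ) * Real.log 2 + 1 with hkk
  have hkk1 : (1:ℝ) ≤ kk := by
    have h1 : (0:ℝ) ≤ ((r:ℝ)+1) * Real.log p := by positivity
    have h2 : (0:ℝ) ≤ (m:ℝ) * Real.log 2 := by positivity
    rw [hkk]; linarith
  have hkk0 : (0:ℝ) < kk := by linarith
  set N : ℕ := 2^m with hN
  have hN0 : 0 < N := Nat.pow_pos (by norm_num)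
  have hNR0 : (0:ℝ) < (N:ℝ) := by exact_mod_cast hN0
  set C : ℝ := (2:ℝ) ^ ((m:ℝ)/2) with hC
  have hC0 : 0 < C := Real.rpow_pos_of_pos (by norm_num) _
  have hC2 : C * C = (N:ℝ) := by
    rw [hC, ← Real.rpow_add (by norm_num)]
    have : (m:ℝ)/2 + (m:ℝ)/2 = ((m:ℕ):ℝ) := by ring
    rw [this, Real.rpow_natCast, hN]
    push_cast
    ring
  have hcardβ : ((Fintype.card (Fin m → Bool)):ℝ) = (N:ℝ) := by
    rw [hN]; simp [Fintype.card_fun]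
  -- main numeric inequality, under the assumption N ≤ p
  have hM : (N:ℝ) ≤ (p:ℝ) → 4*kk*(A*A) ≤ 9*(r:ℝ)^2*L^2*(K:ℝ) := by
    intro hNp
    have hmlog : (m:ℝ) * Real.log 2 ≤ Real.log p := by
      have h1 : Real.log (N:ℝ) ≤ Real.log p := Real.log_le_log hNR0 hNp
      rw [hN] at h1
      push_cast at h1
      rwa [Real.log_pow] at h1
    have hkk2rL : kk ≤ 2*(r:ℝ)*L := by
      have h1 : kk ≤ ((r:ℝ)+3) * Real.log p := by
        rw [hkk]; linarith [hmlog, hlogp1]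
      have h2 : ((r:ℝ)+3) * Real.log p ≤ (2*(r:ℝ)) * Real.log p :=
        mul_le_mul_of_nonneg_right (by linarith) hlogppos.le
      have h3 : (2*(r:ℝ)) * Real.log p ≤ (2*(r:ℝ)) * L :=
        mul_le_mul_of_nonneg_left hlogpL (by linarith)
      linarith
    have t1 : (4*kk)*(A*A) ≤ (8*(r:ℝ)*L)*(A*A) :=
      mul_le_mul_of_nonneg_right (by linarith) (mul_pos hA0 hA0).le
    have t2 : (8*(r:ℝ)*L)*(A*A) ≤ (8*(r:ℝ)*L)*(K:ℝ) :=
      mul_le_mul_of_nonneg_left hAA (by positivity)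
    have hrL : (8:ℝ) ≤ (r:ℝ)*L := by
      have := mul_le_mul_of_nonneg_left hL1 (by linarith : (0:ℝ) ≤ (r:ℝ))
      linarith
    have t3 : (8*(r:ℝ)*L)*(K:ℝ) ≤ 9*(r:ℝ)^2*L^2*(K:ℝ) := by
      have h5 := aux_rL hrL hK0R.le
      linarith [h5]
    linarith
  -- RHS split
  have hterm2 : (0:ℝ) ≤ (p:ℝ)^(-(1:ℝ)/2) * C * L := by
    have h1 : (0:ℝ) < (p:ℝ)^(-(1:ℝ)/2) := Real.rpow_pos_of_pos hp0 _
    have h2 : (0:ℝ) ≤ L := by linarith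
    exact mul_nonneg (mul_nonneg h1.le hC0.le) h2
  have hterm1 : (0:ℝ) ≤ 3*(r:ℝ)/A * C * L := by positivity
  by_cases hCC : 4*kk*(N:ℝ) ≤ (K:ℝ)
  · -- construct a good extractor
    have hsmall : 4 * kk ≤ (K:ℝ) / ((Fintype.card (Fin m → Bool)):ℝ) := by
      rw [hcardβ, le_div_iff₀ hNR0]
      linarith
    have hunion : ((Fintype.card (ZMod p × (Fin r → ZMod p)) : ℝ))
        * ((Fintype.card (Fin m → Bool)):ℝ) * Real.exp (-kk) < 1 := by
      rw [hcardβ]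
      have hcardI : ((Fintype.card (ZMod p × (Fin r → ZMod p)) : ℝ))
          = (p:ℝ) * (p:ℝ)^r := by
        rw [Fintype.card_prod, Fintype.card_fun, ZMod.card, Fintype.card_fin]
        push_cast
        ring
      rw [hcardI]
      have e1 : (p:ℝ) * (p:ℝ)^r * (N:ℝ)
          = Real.exp (((r:ℝ)+1) * Real.log p + (m:ℝ) * Real.log 2) := by
        have ep : (p:ℝ) = Real.exp (Real.log p) := (Real.exp_log hp0).symm
        have e2' : (2:ℝ) = Real.exp (Real.log 2) := (Real.exp_log (by norm_num)).symm
        rw [hN]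
        push_cast
        calc (p:ℝ) * (p:ℝ)^r * (2:ℝ)^m
            = Real.exp (Real.log p) * (Real.exp (Real.log p))^r
              * (Real.exp (Real.log 2))^m := by rw [← ep, ← e2']
          _ = Real.exp (Real.log p) * Real.exp ((r:ℝ) * Real.log p)
              * Real.exp ((m:ℝ) * Real.log 2) := by rw [← Real.exp_nat_mul, ← Real.exp_nat_mul]
          _ = Real.exp (((r:ℝ)+1) * Real.log p + (m:ℝ) * Real.log 2) := by
              rw [← Real.exp_add, ← Real.exp_add]; congr 1; ring
      rw [e1, ← Real.exp_add]
      apply Real.exp_lt_one_iff.mpr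
      rw [hkk]
      linarith
    obtain ⟨f, hf⟩ := exists_good_ext
      (α := ZMod p) (β := Fin m → Bool)
      (I := ZMod p × (Fin r → ZMod p))
      (fun z => Finset.image
        (fun a : Fin r → Fin s => z.1 + ∑ i, ((a i : ℕ)) • z.2 i) Finset.univ)
      K hK0 kk hkk0 hsmall hunion
    refine ⟨f, ?_⟩
    intro X hX
    obtain ⟨⟨b0, b, hset⟩, hcard⟩ := hX
    have hXimg : X = Finset.image
        (fun a : Fin r → Fin s => b0 + ∑ i, ((a i : ℕ)) • b i) Finset.univ :=
      gap_eq_image r s b0 b X hset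
    have himgcard : (Finset.image
        (fun a : Fin r → Fin s => b0 + ∑ i, ((a i : ℕ)) • b i) Finset.univ).card = K := by
      rw [← hXimg]; exact hcard
    have hcount := hf (b0, b) himgcard
    rw [hcardβ] at hcount
    rw [← hXimg] at hcount
    set t : ℝ := 2 * Real.sqrt (kk * (K:ℝ) / (N:ℝ)) with htdef
    have ht0 : 0 ≤ t := by positivity
    have hXcard : X.card ≠ 0 := by rw [hcard]; exact hK0.ne'
    have hKp : (K:ℝ) ≤ (p:ℝ) := by
      have h1 : X.card ≤ Fintype.card (ZMod p) := Finset.card_le_univ X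
      rw [hcard, ZMod.card] at h1
      exact_mod_cast h1
    have hNp : (N:ℝ) ≤ (p:ℝ) := by
      have h1 : (1:ℝ)*(N:ℝ) ≤ (4*kk)*(N:ℝ) :=
        mul_le_mul_of_nonneg_right (by linarith) hNR0.le
      have h2 : 4*kk*(N:ℝ) ≤ (p:ℝ) := le_trans hCC hKp
      linarith
    have hM' := hM hNp
    -- bound the statistical distance
    have hsd : statDist X f ≤ (N:ℝ) * (t / (K:ℝ)) := by
      rw [statDist_eq_posPart X f hXcard]
      have hXC : (X.card : ℝ) = (K:ℝ) := by exact_mod_cast congrArg Nat.cast hcard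
      calc ∑ y : Fin m → Bool, max (((X.filter (fun x => f x = y)).card : ℝ) / (X.card : ℝ)
            - 1 / (Fintype.card (Fin m → Bool) : ℝ)) 0
          ≤ ∑ _y : Fin m → Bool, t / (K:ℝ) := by
            apply Finset.sum_le_sum
            intro y _
            apply max_le _ (by positivity)
            rw [hXC, hcardβ]
            rw [sub_le_iff_le_add, div_le_iff₀ hK0R, add_mul,
              div_mul_cancel₀ _ hK0R.ne', one_div, inv_mul_eq_div]
            have := hcount y
            rw [div_eq_inv_mul] at this ⊢
            linarith [hcount y]
        _ = (N:ℝ) * (t / (K:ℝ)) := by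
            rw [Finset.sum_const, nsmul_eq_mul, Finset.card_univ, hcardβ]
    -- numeric comparison
    have hstep2 : (N:ℝ) * (t / (K:ℝ)) ≤ 3*(r:ℝ)/A * C * L := by
      apply le_of_sq_le' (by positivity) (by positivity)
      have ht2 : t^2 = 4*(kk * (K:ℝ) / (N:ℝ)) := by
        rw [htdef, mul_pow, Real.sq_sqrt (by positivity)]
        norm_num
      have ex : ((N:ℝ) * (t / (K:ℝ)))^2 = 4*kk*(N:ℝ)/(K:ℝ) := by
        rw [mul_pow, div_pow, ht2]
        field_simp
      have ey : (3*(r:ℝ)/A * C * L)^2 = 9*(r:ℝ)^2*(N:ℝ)*L^2/(A*A) := by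
        have hCsq : C^2 = (N:ℝ) := by rw [sq]; exact hC2
        rw [mul_pow, mul_pow, div_pow, hCsq, sq A]
        ring
      rw [ex, ey]
      rw [div_le_div_iff₀ hK0R (by positivity)]
      linarith [mul_le_mul_of_nonneg_right hM' hNR0.le]
    calc statDist X f ≤ (N:ℝ) * (t / (K:ℝ)) := hsd
      _ ≤ 3*(r:ℝ)/A * C * L := hstep2
      _ ≤ (3*(r:ℝ)/A + (p:ℝ)^(-(1:ℝ)/2)) * C * L := by
          have : (3*(r:ℝ)/A + (p:ℝ)^(-(1:ℝ)/2)) * C * L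
              = 3*(r:ℝ)/A * C * L + (p:ℝ)^(-(1:ℝ)/2) * C * L := by ring
          rw [this]
          linarith [hterm2]
  · -- trivial extractor suffices
    refine ⟨(fun _ _ => false : ZMod p → Fin m → Bool), ?_⟩
    intro X hX
    have hone : statDist X (fun (_ : ZMod p) (_ : Fin m) => false) ≤ 1 :=
      statDist_le_one X _
    have hXcard := hX.2
    have hKp : (K:ℝ) ≤ (p:ℝ) := by
      have h1 : X.card ≤ Fintype.card (ZMod p) := Finset.card_le_univ X
      rw [hXcard, ZMod.card] at h1
      exact_mod_cast h1
    have hgoal : (1:ℝ) ≤ (3*(r:ℝ)/A + (p:ℝ)^(-(1:ℝ)/2)) * C * L := by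
      by_cases hA' : (p:ℝ) ≤ (N:ℝ)
      · have h1 : (1:ℝ) ≤ (p:ℝ)^(-(1:ℝ)/2) * C := by
          apply le_of_sq_le' (by norm_num) (by positivity)
          have e1 : ((p:ℝ)^(-(1:ℝ)/2) * C)^2 = (p:ℝ)^(-(1:ℝ)) * (N:ℝ) := by
            rw [mul_pow, sq, sq, ← Real.rpow_add hp0, hC2]
            norm_num
          rw [e1, Real.rpow_neg_one, one_pow]
          rw [inv_mul_eq_div, le_div_iff₀ hp0, one_mul]
          exact hA'
        have h2 : (1:ℝ)*(1:ℝ) ≤ ((p:ℝ)^(-(1:ℝ)/2) * C) * L :=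
          mul_le_mul h1 hL1 (by norm_num) (le_trans (by norm_num) h1)
        have h3 : (3*(r:ℝ)/A + (p:ℝ)^(-(1:ℝ)/2)) * C * L
            = 3*(r:ℝ)/A * C * L + (p:ℝ)^(-(1:ℝ)/2) * C * L := by ring
        rw [h3]
        have h4 : ((p:ℝ)^(-(1:ℝ)/2) * C) * L = (p:ℝ)^(-(1:ℝ)/2) * C * L := by ring
        linarith [hterm1, h2]
      · have hNp : (N:ℝ) ≤ (p:ℝ) := (not_le.mp hA').le
        have hM' := hM hNp
        have hKlt : (K:ℝ) < 4*kk*(N:ℝ) := not_le.mp hCC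
        have hAN : A * A ≤ 9*(r:ℝ)^2*L^2*(N:ℝ) := by
          have h1 : (4*kk)*(A*A) ≤ (4*kk)*(9*(r:ℝ)^2*L^2*(N:ℝ)) := by
            have hh := mul_le_mul_of_nonneg_left hKlt.le
              (show (0:ℝ) ≤ 9*(r:ℝ)^2*L^2 by positivity)
            linarith [hM', hh]
          exact le_of_mul_le_mul_left h1 (by linarith)
        have h1 : (1:ℝ) ≤ 3*(r:ℝ)/A * C * L := by
          apply le_of_sq_le' (by norm_num) (by positivity)
          have ey : (3*(r:ℝ)/A * C * L)^2 = 9*(r:ℝ)^2*(N:ℝ)*L^2/(A*A) := by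
            have hCsq : C^2 = (N:ℝ) := by rw [sq]; exact hC2
            rw [mul_pow, mul_pow, div_pow, hCsq, sq A]
            ring
          rw [ey, one_pow, le_div_iff₀ (by positivity : (0:ℝ) < A*A), one_mul]
          linarith [hAN]
        have h3 : (3*(r:ℝ)/A + (p:ℝ)^(-(1:ℝ)/2)) * C * L
            = 3*(r:ℝ)/A * C * L + (p:ℝ)^(-(1:ℝ)/2) * C * L := by ring
        rw [h3]
        linarith [hterm2, h1]
    linarith
end

section
/- For every ε > 0 there exists c ∈ ℕ such that for every prime p and all integers r ≥ 1 and s with 2^c ≤ s ≤ p, every proper (r, s)-GAP X in ℤ_p satisfies |X| = s^r, |X+X| ≤ |X|^{1+ε}, and |Sym_{1−r/s^{0.9}}(X)| ≥ |X|^{0.1}; that is, X is an (r/s^{0.9}, 0.1, ε)-additive source in ℤ_p. -/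
open Finset Pointwise

/-- `|Sym_{1-a}(X)|`, the number of `g` with `|X ∩ (X+g)| ≥ (1-a)|X|`. -/
noncomputable def symCard {G : Type*} [AddCommGroup G] [DecidableEq G]
    (a : ℝ) (X : Finset G) : ℕ :=
  {g : G | (1 - a) * (X.card : ℝ) ≤ ((X ∩ X.image (· + g)).card : ℝ)}.ncard

lemma prod_one_sub_ge {ι : Type*} (s : Finset ι) (f : ι → ℝ) (h0 : ∀ i ∈ s, 0 ≤ f i)
    (h1 : ∀ i ∈ s, f i ≤ 1) : 1 - ∑ i ∈ s, f i ≤ ∏ i ∈ s, (1 - f i) := by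
  classical
  induction s using Finset.induction with
  | empty => simp
  | @insert a s' hx ih =>
    rw [Finset.sum_insert hx, Finset.prod_insert hx]
    have h0a := h0 a (mem_insert_self a s')
    have h1a := h1 a (mem_insert_self a s')
    have ih' := ih (fun i hi => h0 i (mem_insert_of_mem hi)) (fun i hi => h1 i (mem_insert_of_mem hi))
    have hs : ∑ i ∈ s', f i ≥ 0 := Finset.sum_nonneg (fun i hi => h0 i (mem_insert_of_mem hi))
    nlinarith [Finset.prod_nonneg (fun i (hi : i ∈ s') => by linarith [h1 i (mem_insert_of_mem hi)] : ∀ i ∈ s', (0:ℝ) ≤ 1 - f i)]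

theorem stmt_6 :
    ∀ ε > (0:ℝ), ∃ c : ℕ, ∀ p : ℕ, p.Prime → ∀ r : ℕ, 1 ≤ r → ∀ s : ℕ,
      2 ^ c ≤ s → s ≤ p → ∀ X : Finset (ZMod p), IsProperGAP r s X →
        X.card = s ^ r ∧
        ((X + X).card : ℝ) ≤ (X.card : ℝ) ^ ((1:ℝ) + ε) ∧
        (X.card : ℝ) ^ (0.1:ℝ) ≤ (symCard ((r:ℝ) / (s:ℝ)^(0.9:ℝ)) X : ℝ) := by
  classical
  intro ε hε
  refine ⟨max 1 ⌈1/ε⌉₊, ?_⟩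
  intro p hp r hr s hs hsp X hX
  haveI : NeZero p := ⟨hp.pos.ne'⟩
  obtain ⟨⟨b0, b, hXset⟩, hcard⟩ := hX
  have hs2 : 2 ≤ s := le_trans (by
    calc (2:ℕ) = 2 ^ 1 := (pow_one 2).symm
    _ ≤ 2 ^ max 1 ⌈1/ε⌉₊ := Nat.pow_le_pow_right (by norm_num) (le_max_left _ _)) hs
  have hs0 : (0:ℝ) < (s:ℝ) := by positivity
  set φ : (Fin r → ℕ) → ZMod p := fun a => b0 + ∑ i, a i • b i with hφ
  set T : Finset (Fin r → ℕ) := Fintype.piFinset (fun _ => Finset.range s) with hTdef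
  have hT : T.card = s ^ r := by
    simp [hTdef, Fintype.card_piFinset]
  have hXim : X = T.image φ := by
    apply Finset.coe_injective
    rw [Finset.coe_image, hXset]
    ext x
    simp only [Set.mem_setOf_eq, Set.mem_image, Finset.mem_coe, hTdef,
      Fintype.mem_piFinset, Finset.mem_range, hφ]
    constructor
    · rintro ⟨a, ha, rfl⟩; exact ⟨a, ha, rfl⟩
    · rintro ⟨a, ha, rfl⟩; exact ⟨a, ha, rfl⟩
  have hinj : Set.InjOn φ T := by
    rw [← Finset.card_image_iff, ← hXim, hcard, hT]
  refine ⟨hcard, ?_, ?_⟩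
  · -- doubling bound
    have hsub : X + X ⊆ (Fintype.piFinset (fun _ : Fin r => Finset.range (2*s-1))).image
        (fun a => (b0 + b0) + ∑ i, a i • b i) := by
      intro x hx
      rw [Finset.mem_add] at hx
      obtain ⟨y, hy, z, hz, rfl⟩ := hx
      rw [hXim] at hy hz
      obtain ⟨a, ha, rfl⟩ := Finset.mem_image.1 hy
      obtain ⟨a', ha', rfl⟩ := Finset.mem_image.1 hz
      refine Finset.mem_image.2 ⟨fun i => a i + a' i, ?_, ?_⟩
      · rw [Fintype.mem_piFinset]
        intro i
        have h1 := (Fintype.mem_piFinset.1 ha) i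
        have h2 := (Fintype.mem_piFinset.1 ha') i
        simp only [Finset.mem_range] at *
        omega
      · simp only [hφ, add_nsmul, Finset.sum_add_distrib]
        abel
    have hcard2 : (X+X).card ≤ (2*s-1)^r :=
      le_trans (Finset.card_le_card hsub) (le_trans Finset.card_image_le
        (by simp [Fintype.card_piFinset]))
    have hc1 : 1 ≤ ((max 1 ⌈1/ε⌉₊ : ℕ) : ℝ) * ε := by
      have h1 : (1/ε) ≤ (⌈1/ε⌉₊ : ℝ) := Nat.le_ceil _
      have h2 : ((⌈1/ε⌉₊:ℕ):ℝ) ≤ ((max 1 ⌈1/ε⌉₊ : ℕ):ℝ) := by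
        exact_mod_cast Nat.le_max_right 1 ⌈1/ε⌉₊
      have h3 : (1/ε) ≤ ((max 1 ⌈1/ε⌉₊ : ℕ):ℝ) := le_trans h1 h2
      calc (1:ℝ) = (1/ε) * ε := by field_simp
      _ ≤ _ := mul_le_mul_of_nonneg_right h3 hε.le
    have h2e : (2:ℝ) ≤ (s:ℝ) ^ (ε:ℝ) := by
      have h1 : ((2:ℝ)^(max 1 ⌈1/ε⌉₊ : ℕ)) ≤ (s:ℝ) := by exact_mod_cast hs
      calc (2:ℝ) = 2 ^ (1:ℝ) := (Real.rpow_one 2).symm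
      _ ≤ 2 ^ (((max 1 ⌈1/ε⌉₊ : ℕ):ℝ) * ε) := Real.rpow_le_rpow_of_exponent_le one_le_two hc1
      _ = ((2:ℝ)^(max 1 ⌈1/ε⌉₊ : ℕ)) ^ (ε:ℝ) := by
        rw [← Real.rpow_natCast 2 (max 1 ⌈1/ε⌉₊), ← Real.rpow_mul (by norm_num)]
      _ ≤ (s:ℝ) ^ (ε:ℝ) := Real.rpow_le_rpow (by positivity) h1 hε.le
    have hXc : (X.card:ℝ) = (s:ℝ)^r := by rw [hcard]; push_cast; ring
    calc ((X+X).card:ℝ) ≤ (((2*s-1)^r : ℕ):ℝ) := by exact_mod_cast hcard2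
    _ ≤ ((s:ℝ) ^ ((1:ℝ)+ε)) ^ r := by
      rw [Nat.cast_pow]
      apply pow_le_pow_left₀ (by positivity)
      calc ((2*s-1:ℕ):ℝ) ≤ 2*(s:ℝ) := by
            have : (2*s-1:ℕ) ≤ 2*s := by omega
            calc ((2*s-1:ℕ):ℝ) ≤ ((2*s:ℕ):ℝ) := by exact_mod_cast this
            _ = 2*(s:ℝ) := by push_cast; ring
      _ ≤ (s:ℝ)^(ε:ℝ) * s := mul_le_mul_of_nonneg_right h2e hs0.le
      _ = (s:ℝ) ^ ((1:ℝ)+ε) := by rw [Real.rpow_add hs0, Real.rpow_one]; ring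
    _ = (X.card:ℝ) ^ ((1:ℝ)+ε) := by
      rw [hXc, ← Real.rpow_natCast ((s:ℝ)^((1:ℝ)+ε)) r, ← Real.rpow_mul hs0.le,
        mul_comm, Real.rpow_mul hs0.le, Real.rpow_natCast]
  · -- symmetry set bound
    have hXc : (X.card:ℝ) = (s:ℝ)^r := by rw [hcard]; push_cast; ring
    set m : ℕ := min s (⌊(s:ℝ)^(0.1:ℝ)⌋₊ + 1) with hmdef
    have hm1 : 1 ≤ m := le_min (by omega) (by omega)
    have hms : m ≤ s := min_le_left _ _
    have hmle : ((m:ℝ)) - 1 ≤ (s:ℝ)^(0.1:ℝ) := by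
      have h1 : m ≤ ⌊(s:ℝ)^(0.1:ℝ)⌋₊ + 1 := min_le_right _ _
      have h2 : ((m:ℝ)) ≤ ((⌊(s:ℝ)^(0.1:ℝ)⌋₊:ℕ):ℝ) + 1 := by exact_mod_cast h1
      have h3 : ((⌊(s:ℝ)^(0.1:ℝ)⌋₊:ℕ):ℝ) ≤ (s:ℝ)^(0.1:ℝ) := Nat.floor_le (by positivity)
      linarith
    have hs1 : (1:ℝ) ≤ (s:ℝ) := by exact_mod_cast hs2.trans' one_le_two
    have hmge : (s:ℝ)^(0.1:ℝ) ≤ (m:ℝ) := by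
      have h1 : (s:ℝ)^(0.1:ℝ) ≤ (s:ℝ) := by
        calc (s:ℝ)^(0.1:ℝ) ≤ (s:ℝ)^(1:ℝ) :=
              Real.rpow_le_rpow_of_exponent_le hs1 (by norm_num)
        _ = (s:ℝ) := Real.rpow_one _
      have h2 : (s:ℝ)^(0.1:ℝ) < ((⌊(s:ℝ)^(0.1:ℝ)⌋₊:ℕ):ℝ) + 1 := Nat.lt_floor_add_one _
      have h3 : ((m:ℕ):ℝ) = min ((s:ℕ):ℝ) (((⌊(s:ℝ)^(0.1:ℝ)⌋₊:ℕ):ℝ) + 1) := by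
        rw [hmdef]; push_cast [Nat.cast_min]; ring_nf
      rw [h3]
      exact le_min h1 h2.le
    set ψ : (Fin r → ℕ) → ZMod p := fun a => ∑ i, a i • b i with hψ
    set S : Finset (Fin r → ℕ) := Fintype.piFinset (fun _ => Finset.range m) with hSdef
    have hST : S ⊆ T := by
      intro a ha
      rw [Fintype.mem_piFinset] at *
      intro i
      have := ha i
      simp only [Finset.mem_range] at *
      omega
    have hψinj : Set.InjOn ψ ↑S := by
      intro a ha a' ha' h
      apply hinj (Finset.mem_coe.2 (hST (Finset.mem_coe.1 ha)))
        (Finset.mem_coe.2 (hST (Finset.mem_coe.1 ha')))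
      show b0 + ψ a = b0 + ψ a'
      rw [h]
    have hF : (S.image ψ).card = m ^ r := by
      rw [Finset.card_image_of_injOn hψinj]
      simp [hSdef, Fintype.card_piFinset]
    have hα : ∀ g ∈ S.image ψ,
        (1 - (r:ℝ)/(s:ℝ)^(0.9:ℝ)) * (X.card:ℝ) ≤ ((X ∩ X.image (· + g)).card : ℝ) := by
      intro g hg
      obtain ⟨a, ha, rfl⟩ := Finset.mem_image.1 hg
      have haS : ∀ i, a i < m := fun i => Finset.mem_range.1 ((Fintype.mem_piFinset.1 ha) i)
      set P : Finset (Fin r → ℕ) := Fintype.piFinset (fun i => Finset.Ico (a i) s) with hPdef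
      have hPT : P ⊆ T := by
        intro d hd
        rw [Fintype.mem_piFinset] at *
        intro i
        have := hd i
        simp only [Finset.mem_range, Finset.mem_Ico] at *
        omega
      have hPcard : P.card = ∏ i, (s - a i) := by
        simp [hPdef, Fintype.card_piFinset, Nat.card_Ico]
      have hPsub : P.image φ ⊆ X ∩ X.image (· + ψ a) := by
        intro x hx
        obtain ⟨d, hd, rfl⟩ := Finset.mem_image.1 hx
        refine Finset.mem_inter.2 ⟨?_, ?_⟩
        · rw [hXim]; exact Finset.mem_image_of_mem φ (hPT hd)
        · refine Finset.mem_image.2 ⟨φ (fun i => d i - a i), ?_, ?_⟩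
          · rw [hXim]
            refine Finset.mem_image_of_mem φ ?_
            rw [Fintype.mem_piFinset]
            intro i
            have := (Fintype.mem_piFinset.1 hd) i
            simp only [Finset.mem_Ico] at this
            simp only [Finset.mem_range]
            omega
          · simp only [hφ, hψ]
            rw [add_assoc, ← Finset.sum_add_distrib]
            congr 1
            apply Finset.sum_congr rfl
            intro i _
            rw [← add_nsmul]
            congr 1
            have := (Fintype.mem_piFinset.1 hd) i
            simp only [Finset.mem_Ico] at this
            omega
      have hcount : (∏ i, (s - a i) : ℕ) ≤ (X ∩ X.image (· + ψ a)).card := by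
        rw [← hPcard, ← Finset.card_image_of_injOn (hinj.mono (Finset.coe_subset.2 hPT))]
        exact Finset.card_le_card hPsub
      have hasle : ∀ i, a i ≤ s := fun i => le_of_lt (lt_of_lt_of_le (haS i) hms)
      have hcast : ((∏ i, (s - a i) : ℕ) : ℝ) = ∏ i, ((s:ℝ) - (a i:ℝ)) := by
        rw [Nat.cast_prod]
        apply Finset.prod_congr rfl
        intro i _
        rw [Nat.cast_sub (hasle i)]
      have hprod : (1 - ∑ i, (a i:ℝ)/(s:ℝ)) * (s:ℝ)^r ≤ ∏ i, ((s:ℝ) - (a i:ℝ)) := by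
        have hkey := prod_one_sub_ge Finset.univ (fun i => (a i:ℝ)/(s:ℝ))
          (fun i _ => by positivity)
          (fun i _ => by
            rw [div_le_one hs0]
            exact_mod_cast hasle i)
        calc (1 - ∑ i, (a i:ℝ)/(s:ℝ)) * (s:ℝ)^r
            ≤ (∏ i, (1 - (a i:ℝ)/(s:ℝ))) * (s:ℝ)^r :=
              mul_le_mul_of_nonneg_right hkey (by positivity)
        _ = ∏ i, ((s:ℝ) - (a i:ℝ)) := by
            have hsr : (s:ℝ)^r = ∏ _i : Fin r, (s:ℝ) := by
              simp [Finset.prod_const]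
            rw [hsr, ← Finset.prod_mul_distrib]
            apply Finset.prod_congr rfl
            intro i _
            field_simp
      have hpow : (s:ℝ)^(0.9:ℝ) * (s:ℝ)^(0.1:ℝ) = (s:ℝ) := by
        rw [← Real.rpow_add hs0]
        norm_num
      have hsum : ∑ i, (a i:ℝ)/(s:ℝ) ≤ (r:ℝ)/(s:ℝ)^(0.9:ℝ) := by
        have h1 : ∑ i, (a i:ℝ)/(s:ℝ) ≤ ∑ _i : Fin r, ((s:ℝ)^(0.1:ℝ))/(s:ℝ) := by
          apply Finset.sum_le_sum
          intro i _
          gcongr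
          have h2 : (a i:ℝ) + 1 ≤ (m:ℝ) := by exact_mod_cast haS i
          linarith
        rw [Finset.sum_const, Finset.card_univ, Fintype.card_fin, nsmul_eq_mul] at h1
        have key : (s:ℝ)^(0.1:ℝ)/(s:ℝ) = 1/(s:ℝ)^(0.9:ℝ) := by
          rw [div_eq_div_iff hs0.ne' (by positivity), one_mul, mul_comm]
          exact hpow
        rw [key] at h1
        calc ∑ i, (a i:ℝ)/(s:ℝ) ≤ (r:ℝ) * (1/(s:ℝ)^(0.9:ℝ)) := h1
        _ = (r:ℝ)/(s:ℝ)^(0.9:ℝ) := by ring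
      calc (1 - (r:ℝ)/(s:ℝ)^(0.9:ℝ)) * (X.card:ℝ)
          = (1 - (r:ℝ)/(s:ℝ)^(0.9:ℝ)) * (s:ℝ)^r := by rw [hXc]
      _ ≤ (1 - ∑ i, (a i:ℝ)/(s:ℝ)) * (s:ℝ)^r :=
          mul_le_mul_of_nonneg_right (by linarith) (by positivity)
      _ ≤ ∏ i, ((s:ℝ) - (a i:ℝ)) := hprod
      _ = ((∏ i, (s - a i) : ℕ) : ℝ) := hcast.symm
      _ ≤ ((X ∩ X.image (· + ψ a)).card : ℝ) := by exact_mod_cast hcount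
    have hnc : ((m:ℝ))^r ≤ (symCard ((r:ℝ)/(s:ℝ)^(0.9:ℝ)) X : ℕ) := by
      unfold symCard
      have hFsub : ↑(S.image ψ) ⊆ {g : ZMod p |
          (1 - (r:ℝ)/(s:ℝ)^(0.9:ℝ)) * (X.card:ℝ) ≤ ((X ∩ X.image (· + g)).card : ℝ)} := by
        intro g hg
        exact hα g (Finset.mem_coe.1 hg)
      have h := Set.ncard_le_ncard hFsub (Set.toFinite _)
      rw [Set.ncard_coe_finset, hF] at h
      exact_mod_cast h
    calc (X.card:ℝ)^(0.1:ℝ) = ((s:ℝ)^r)^(0.1:ℝ) := by rw [hXc]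
    _ = ((s:ℝ)^(0.1:ℝ))^r := by
        rw [← Real.rpow_natCast (s:ℝ) r, ← Real.rpow_mul hs0.le, mul_comm,
          Real.rpow_mul hs0.le, Real.rpow_natCast]
    _ ≤ ((m:ℝ))^r := pow_le_pow_left₀ (by positivity) hmge r
    _ ≤ _ := hnc
end

section
/- There exists n₀ such that for all n ≥ n₀ and every prime power q with q > 200·n·log₂ n, there exists a function f : 𝔽_q^n → {0,1} such that for every affine line L = {a + t·b : t ∈ 𝔽_q} ⊆ 𝔽_q^n with b ≠ 0, the statistical distance between f(L) (the distribution of f applied to a uniform element of L) and the uniform distribution on {0,1} is at most 0.1. -/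
open Finset

def tailSum (q : ℕ) : ℕ := ∑ k ∈ Finset.range (q+1), if 3*q+1 ≤ 5*k then q.choose k else 0

lemma tail_bound (q : ℕ) : ((tailSum q : ℝ))^5 * 108^q ≤ 3125^q := by
  set m : ℕ := 3*q/5 + 1 with hm
  have hm3q : 3*q < 5*m := by
    have h1 := Nat.div_add_mod (3*q) 5
    have h2 : (3*q) % 5 < 5 := Nat.mod_lt _ (by norm_num)
    omega
  -- T * (3/2)^m ≤ (5/2)^q
  have key : (tailSum q : ℝ) * (3/2)^m ≤ (5/2)^q := by
    have hbin : ∑ k ∈ Finset.range (q+1), (3/2:ℝ)^k * 1^(q-k) * q.choose k = (3/2+1)^q :=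
      (add_pow (3/2:ℝ) 1 q).symm
    calc (tailSum q : ℝ) * (3/2)^m
        = ∑ k ∈ Finset.range (q+1), (if 3*q+1 ≤ 5*k then (q.choose k : ℝ) else 0) * (3/2)^m := by
          rw [tailSum]; push_cast [Finset.sum_mul]
          refine Finset.sum_congr rfl fun k _ => ?_
          split <;> simp
      _ ≤ ∑ k ∈ Finset.range (q+1), (3/2:ℝ)^k * 1^(q-k) * q.choose k := by
          refine Finset.sum_le_sum fun k _ => ?_
          split
          · rename_i h
            have hmk : m ≤ k := by omega
            have : (3/2:ℝ)^m ≤ (3/2)^k := pow_le_pow_right₀ (by norm_num) hmk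
            rw [one_pow, mul_one]
            calc (q.choose k : ℝ) * (3/2)^m ≤ (q.choose k : ℝ) * (3/2)^k := by
                  exact mul_le_mul_of_nonneg_left this (by positivity)
              _ = (3/2:ℝ)^k * q.choose k := by ring
          · rw [zero_mul]; positivity
      _ = (5/2)^q := by rw [hbin]; norm_num
  have hT : (tailSum q : ℝ) ≤ (5/2)^q * (2/3)^m := by
    have h1 : ((3/2:ℝ)^m)*((2/3)^m) = 1 := by rw [← mul_pow]; norm_num
    calc (tailSum q : ℝ) = (tailSum q : ℝ) * (3/2)^m * (2/3)^m := by rw [mul_assoc, h1, mul_one]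
      _ ≤ (5/2)^q * (2/3)^m := mul_le_mul_of_nonneg_right key (by positivity)
  -- fifth power
  have hT5 : (tailSum q : ℝ)^5 ≤ ((5/2)^q)^5 * ((2/3)^(3*q)) := by
    have h0 : (0: ℝ) ≤ tailSum q := Nat.cast_nonneg _
    calc (tailSum q : ℝ)^5 ≤ ((5/2)^q * (2/3)^m)^5 := pow_le_pow_left₀ h0 hT 5
      _ = ((5/2)^q)^5 * (2/3)^(m*5) := by ring
      _ ≤ ((5/2)^q)^5 * (2/3)^(3*q) := by
          have h23 : ((2:ℝ)/3)^(m*5) ≤ (2/3)^(3*q) :=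
            pow_le_pow_of_le_one (by norm_num) (by norm_num) (by omega)
          exact mul_le_mul_of_nonneg_left h23 (by positivity)
  calc (tailSum q : ℝ)^5 * 108^q ≤ ((5/2)^q)^5 * ((2/3)^(3*q)) * 108^q :=
        mul_le_mul_of_nonneg_right hT5 (by positivity)
    _ = 3125^q := by
        rw [← pow_mul, mul_comm q 5, pow_mul, pow_mul (2/3:ℝ), ← mul_pow, ← mul_pow]
        norm_num
lemma fiber_count {α : Type*} [Fintype α] [DecidableEq α] (L : Finset α) (S : Finset α)
    (hS : S ⊆ L) :
    (Finset.univ.filter (fun f : α → Bool => L.filter (fun x => f x = true) = S)).card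
      = 2^(Fintype.card α - L.card) := by
  rw [← Finset.card_univ, ← Finset.card_sdiff_of_subset (Finset.subset_univ L), ← Finset.card_powerset]
  apply Finset.card_bij' (i := fun f _ => (Finset.univ \ L).filter (fun x => f x = true))
    (j := fun B _ => fun x => decide (x ∈ S ∪ B))
  · intro f hf
    exact Finset.mem_powerset.mpr (Finset.filter_subset _ _)
  · intro B hB
    simp only [Finset.mem_powerset] at hB
    simp only [Finset.mem_filter, Finset.mem_univ, true_and]
    ext x
    simp only [Finset.mem_filter, decide_eq_true_eq, Finset.mem_union]
    constructor
    · rintro ⟨hxL, (hxS | hxB)⟩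
      · exact hxS
      · exact absurd ((Finset.mem_sdiff.mp (hB hxB)).2) (fun h => h hxL)
    · intro hxS
      exact ⟨hS hxS, Or.inl hxS⟩
  · intro f hf
    simp only [Finset.mem_filter, Finset.mem_univ, true_and] at hf
    funext x
    have hmem : (x ∈ S ∪ (Finset.univ \ L).filter (fun y => f y = true)) ↔ f x = true := by
      rw [← hf]
      simp only [Finset.mem_union, Finset.mem_filter, Finset.mem_sdiff, Finset.mem_univ, true_and]
      by_cases hxL : x ∈ L
      · simp [hxL]
      · simp [hxL]
    rcases hfx : f x with _|_ <;> simp only [hfx] at hmem ⊢ <;> simp [hmem]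
  · intro B hB
    simp only [Finset.mem_powerset] at hB
    ext x
    simp only [Finset.mem_filter, Finset.mem_sdiff, Finset.mem_univ, true_and,
      decide_eq_true_eq, Finset.mem_union]
    constructor
    · rintro ⟨hxL, (hxS | hxB)⟩
      · exact absurd (hS hxS) hxL
      · exact hxB
    · intro hxB
      have := hB hxB
      simp only [Finset.mem_sdiff, Finset.mem_univ, true_and] at this
      exact ⟨this, Or.inr hxB⟩

lemma powerset_filter_card {α' : Type*} (L : Finset α') (P : ℕ → Prop) [DecidablePred P] [DecidableEq α'] :
    (L.powerset.filter (fun S => P S.card)).card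
      = ∑ t ∈ Finset.range (L.card + 1), if P t then L.card.choose t else 0 := by
  rw [Finset.card_eq_sum_card_fiberwise (f := fun S : Finset α' => S.card)
    (t := Finset.range (L.card + 1))
    (by intro S hSmem
        simp only [Finset.mem_coe, Finset.mem_filter, Finset.mem_powerset] at hSmem
        exact Finset.mem_range.mpr (Nat.lt_succ_of_le (Finset.card_le_card hSmem.1)))]
  refine Finset.sum_congr rfl fun t _ => ?_
  rw [Finset.filter_filter]
  by_cases hPt : P t
  · rw [if_pos hPt]
    have : (L.powerset.filter (fun S => P S.card ∧ S.card = t)) = Finset.powersetCard t L := by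
      rw [Finset.powersetCard_eq_filter]
      apply Finset.filter_congr
      intro S _
      constructor
      · exact fun h => h.2
      · exact fun h => ⟨h ▸ hPt, h⟩
    rw [this, Finset.card_powersetCard]
  · rw [if_neg hPt]
    have : (L.powerset.filter (fun S => P S.card ∧ S.card = t)) = ∅ := by
      apply Finset.filter_false_of_mem
      intro S _
      rintro ⟨h1, h2⟩
      exact hPt (h2 ▸ h1)
    rw [this, Finset.card_empty]

lemma count_bad {α : Type*} [Fintype α] [DecidableEq α] (L : Finset α) (P : ℕ → Prop)
    [DecidablePred P] :
    ((Finset.univ.filter (fun f : α → Bool => P ((L.filter (fun x => f x = true)).card))).card)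
      = (∑ t ∈ Finset.range (L.card + 1), if P t then L.card.choose t else 0)
          * 2^(Fintype.card α - L.card) := by
  rw [Finset.card_eq_sum_card_fiberwise
    (f := fun f : α → Bool => L.filter (fun x => f x = true))
    (t := L.powerset.filter (fun S => P S.card))
    (by intro f hf
        simp only [Finset.mem_coe, Finset.mem_filter, Finset.mem_univ, true_and] at hf ⊢
        exact ⟨Finset.mem_powerset.mpr (Finset.filter_subset _ _), hf⟩)]
  have hfib : ∀ S ∈ L.powerset.filter (fun S => P S.card),
      ((Finset.univ.filter (fun f : α → Bool => P ((L.filter (fun x => f x = true)).card))).filter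
        (fun f => L.filter (fun x => f x = true) = S)).card = 2^(Fintype.card α - L.card) := by
    intro S hS
    simp only [Finset.mem_filter, Finset.mem_powerset] at hS
    rw [Finset.filter_filter]
    have : (Finset.univ.filter (fun f : α → Bool =>
        P ((L.filter (fun x => f x = true)).card) ∧ L.filter (fun x => f x = true) = S))
        = Finset.univ.filter (fun f : α → Bool => L.filter (fun x => f x = true) = S) := by
      apply Finset.filter_congr
      intro f _
      constructor
      · exact fun h => h.2
      · exact fun h => ⟨by rw [h]; exact hS.2, h⟩
    rw [this]
    exact fiber_count L S hS.1
  rw [Finset.sum_congr rfl hfib, Finset.sum_const, smul_eq_mul,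
    powerset_filter_card L P]
lemma bad_le_two_tail (q : ℕ) :
    (∑ t ∈ Finset.range (q+1), if ¬(2*q ≤ 5*t ∧ 5*t ≤ 3*q) then q.choose t else 0)
      ≤ 2 * tailSum q := by
  have hsplit : ∀ t ∈ Finset.range (q+1),
      (if ¬(2*q ≤ 5*t ∧ 5*t ≤ 3*q) then q.choose t else 0)
        ≤ (if 3*q+1 ≤ 5*t then q.choose t else 0) + (if 5*t+1 ≤ 2*q then q.choose t else 0) := by
    intro t _
    by_cases h1 : 3*q+1 ≤ 5*t
    · rw [if_pos h1]
      split <;> simp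
    · by_cases h2 : 5*t+1 ≤ 2*q
      · rw [if_neg h1, if_pos h2]
        split <;> simp
      · rw [if_neg h1, if_neg h2, if_neg (by omega)]
  refine (Finset.sum_le_sum hsplit).trans ?_
  have hlow : (∑ t ∈ Finset.range (q+1), if 5*t+1 ≤ 2*q then q.choose t else 0) = tailSum q := by
    have hrefl := Finset.sum_range_reflect (fun t => if 5*t+1 ≤ 2*q then q.choose t else 0) (q+1)
    rw [← hrefl, tailSum]
    refine Finset.sum_congr rfl fun j hj => ?_
    rw [Finset.mem_range] at hj
    have hjq : j ≤ q := by omega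
    simp only [Nat.add_sub_cancel]
    have hcond : (5*(q-j)+1 ≤ 2*q) ↔ (3*q+1 ≤ 5*j) := by omega
    rw [Nat.choose_symm hjq]
    by_cases h : 3*q+1 ≤ 5*j
    · rw [if_pos h, if_pos (hcond.mpr h)]
    · rw [if_neg h, if_neg (fun hc => h (hcond.mp hc))]
  rw [Finset.sum_add_distrib, hlow, two_mul]
  exact add_le_add (le_of_eq rfl) le_rfl
lemma log_c_ge : (1/10:ℝ) ≤ Real.log (3456/3125) := by
  rw [Real.le_log_iff_exp_le (by norm_num)]
  by_contra h
  push_neg at h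
  have h10 : Real.exp 1 = (Real.exp (1/10))^10 := by
    rw [← Real.exp_nat_mul]; norm_num
  have hlt : (3456/3125:ℝ)^10 < (Real.exp (1/10))^10 :=
    pow_lt_pow_left₀ h (by norm_num) (by norm_num)
  have h1 : Real.exp 1 < 2.7182818286 := Real.exp_one_lt_d9
  have h2 : (2.7182818286:ℝ) < (3456/3125:ℝ)^10 := by norm_num
  rw [h10] at h1
  linarith

set_option maxHeartbeats 1000000 in
lemma analytic (n q : ℕ) (hn : 2^100 ≤ n) (hq : 200*(n:ℝ)*Real.logb 2 n < q) :
    32 * (q:ℝ)^(10*n) < (3456/3125)^q := by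
  have hl2a : (0.6931:ℝ) < Real.log 2 := by
    have := Real.log_two_gt_d9; linarith
  have hl2b : Real.log 2 < 0.6932 := by
    have := Real.log_two_lt_d9; linarith
  have hn1 : (1:ℝ) ≤ (n:ℝ) := by
    have : (1:ℕ) ≤ n := le_trans (by norm_num) hn
    exact_mod_cast this
  have hx : (69:ℝ) ≤ Real.log (n:ℝ) := by
    have hn' : ((2:ℝ))^100 ≤ (n:ℝ) := by
      have : ((2^100 : ℕ) : ℝ) ≤ (n:ℝ) := Nat.cast_le.mpr hn
      push_cast at this; linarith
    have h1 : Real.log ((2:ℝ)^100) ≤ Real.log n :=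
      Real.log_le_log (by positivity) hn'
    rw [Real.log_pow] at h1
    push_cast at h1
    linarith
  clear hn
  have hBl2 : Real.logb 2 (n:ℝ) * Real.log 2 = Real.log (n:ℝ) := by
    rw [Real.logb, div_mul_cancel₀]
    linarith
  have hB0 : (0:ℝ) < Real.logb 2 (n:ℝ) := by nlinarith
  have hB99 : (99:ℝ) ≤ Real.logb 2 (n:ℝ) := by nlinarith
  have hBx : Real.logb 2 (n:ℝ) ≤ 1.45 * Real.log (n:ℝ) := by nlinarith
  have hxB : Real.log (n:ℝ) ≤ 0.6932 * Real.logb 2 (n:ℝ) := by nlinarith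
  have hq0 : (0:ℝ) < (q:ℝ) := lt_trans (by positivity) hq
  have hlogq : Real.log q ≤ (q:ℝ)/(200*(n:ℝ)*Real.logb 2 (n:ℝ))
      + Real.log (200*(n:ℝ)*Real.logb 2 (n:ℝ)) := by
    have h1 : Real.log ((q:ℝ)/(200*(n:ℝ)*Real.logb 2 (n:ℝ)))
        ≤ (q:ℝ)/(200*(n:ℝ)*Real.logb 2 (n:ℝ)) - 1 :=
      Real.log_le_sub_one_of_pos (by positivity)
    rw [Real.log_div (by positivity) (by positivity)] at h1
    linarith
  have hlogK : Real.log (200*(n:ℝ)*Real.logb 2 (n:ℝ))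
      ≤ 5.6 + Real.log (n:ℝ) + 1.45*Real.log (n:ℝ) := by
    have h1 : Real.log (200*(n:ℝ)*Real.logb 2 (n:ℝ))
        = Real.log 200 + Real.log (n:ℝ) + Real.log (Real.logb 2 (n:ℝ)) := by
      rw [Real.log_mul (by positivity) (by positivity),
        Real.log_mul (by positivity) (by positivity)]
    have h200 : Real.log 200 ≤ 5.6 := by
      have h2 : Real.log 200 ≤ Real.log ((2:ℝ)^8) := Real.log_le_log (by norm_num) (by norm_num)
      rw [Real.log_pow] at h2
      push_cast at h2
      linarith
    have hlogB : Real.log (Real.logb 2 (n:ℝ)) ≤ 1.45*Real.log (n:ℝ) := by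
      have := Real.log_le_sub_one_of_pos hB0
      linarith
    linarith
  have h32 : Real.log 32 ≤ 3.47 := by
    have h2 : Real.log 32 = Real.log ((2:ℝ)^5) := by norm_num
    rw [h2, Real.log_pow]
    push_cast
    linarith
  have hkey : Real.log (32 * (q:ℝ)^(10*n)) < Real.log ((3456/3125:ℝ)^q) := by
    rw [Real.log_mul (by norm_num) (by positivity), Real.log_pow, Real.log_pow]
    have hrhs : (q:ℝ) * (1/10) ≤ (q:ℝ) * Real.log (3456/3125) :=
      mul_le_mul_of_nonneg_left log_c_ge (le_of_lt hq0)
    have hdiveq : ((10*n : ℕ):ℝ) * ((q:ℝ)/(200*(n:ℝ)*Real.logb 2 (n:ℝ)))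
        = (q:ℝ)/(20*Real.logb 2 (n:ℝ)) := by
      push_cast
      field_simp
      ring
    have hdivle : (q:ℝ)/(20*Real.logb 2 (n:ℝ)) ≤ (q:ℝ)/1980 := by
      apply div_le_div_of_nonneg_left (le_of_lt hq0) (by norm_num)
      linarith
    have hlogq' : ((10*n:ℕ):ℝ) * Real.log q
        ≤ (q:ℝ)/1980 + 10*(n:ℝ)*(5.6 + Real.log (n:ℝ) + 1.45*Real.log (n:ℝ)) := by
      have hmul : ((10*n:ℕ):ℝ) * Real.log q
          ≤ ((10*n:ℕ):ℝ) * ((q:ℝ)/(200*(n:ℝ)*Real.logb 2 (n:ℝ))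
              + Real.log (200*(n:ℝ)*Real.logb 2 (n:ℝ))) :=
        mul_le_mul_of_nonneg_left hlogq (by positivity)
      rw [mul_add, hdiveq] at hmul
      have h3 : ((10*n:ℕ):ℝ) * Real.log (200*(n:ℝ)*Real.logb 2 (n:ℝ))
          ≤ 10*(n:ℝ)*(5.6 + Real.log (n:ℝ) + 1.45*Real.log (n:ℝ)) := by
        push_cast
        nlinarith [hlogK, hn1]
      linarith [hdivle]
    have hmul1 : (n:ℝ)*Real.log (n:ℝ) ≤ (n:ℝ)*(0.6932*Real.logb 2 (n:ℝ)) :=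
      mul_le_mul_of_nonneg_left hxB (Nat.cast_nonneg n)
    have hqnx : 288*((n:ℝ)*Real.log (n:ℝ)) < (q:ℝ) := by nlinarith [hq, hmul1, hB0, hn1]
    have hmul2 : (n:ℝ)*69 ≤ (n:ℝ)*Real.log (n:ℝ) :=
      mul_le_mul_of_nonneg_left hx (Nat.cast_nonneg n)
    have hnx69 : (69:ℝ) ≤ (n:ℝ)*Real.log (n:ℝ) := by linarith
    have h56 : 56*(n:ℝ) ≤ (56/69)*((n:ℝ)*Real.log (n:ℝ)) := by linarith
    have hx347 : (3.47:ℝ) ≤ 0.06*((n:ℝ)*Real.log (n:ℝ)) := by linarith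
    push_cast
    push_cast at hlogq'
    linarith [hrhs, hlogq', h32, hqnx, hnx69, h56, hx347]
  have hpos : (0:ℝ) < 32 * (q:ℝ)^(10*n) := by positivity
  have hpos2 : (0:ℝ) < (3456/3125:ℝ)^q := by positivity
  exact (Real.log_lt_log_iff hpos hpos2).mp hkey
lemma statDist_le_of_count {α : Type*} (L : Finset α) (f : α → Bool) (q t : ℕ)
    (hL : L.card = q) (hq : 0 < q) (ht : (L.filter (fun x => f x = true)).card = t)
    (h1 : 2*q ≤ 5*t) (h2 : 5*t ≤ 3*q) : statDist L f ≤ 0.1 := by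
  have hq0 : (0:ℝ) < (q:ℝ) := by exact_mod_cast hq
  have htq : t ≤ q := by
    rw [← hL, ← ht]; exact Finset.card_le_card (Finset.filter_subset _ _)
  have hfalse : (L.filter (fun x => f x = false)).card = q - t := by
    have hcongr : L.filter (fun x => f x = false) = L.filter (fun x => ¬(f x = true)) := by
      apply Finset.filter_congr
      intro x _
      simp
    have hadd := Finset.card_filter_add_card_filter_not (s := L)
      (p := fun x => f x = true)
    rw [hcongr]
    omega
  have hA : (t:ℝ)/q ≤ 3/5 := by
    rw [div_le_iff₀ hq0]
    have h2' : (5:ℝ)*t ≤ 3*q := by exact_mod_cast h2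
    linarith
  have hB : (2:ℝ)/5 ≤ (t:ℝ)/q := by
    rw [le_div_iff₀ hq0]
    have h1' : (2:ℝ)*q ≤ 5*t := by exact_mod_cast h1
    linarith
  rw [statDist, Fintype.sum_bool]
  rw [hL, ht, hfalse]
  have hcB : (Fintype.card Bool : ℝ) = 2 := by simp
  rw [hcB]
  have hqt : ((q - t : ℕ):ℝ) = (q:ℝ) - t := by
    push_cast [htq]; ring
  rw [hqt]
  have e1 : |(t:ℝ)/q - 1/2| ≤ 1/10 := abs_le.mpr ⟨by linarith, by linarith⟩
  have e2 : |((q:ℝ) - t)/q - 1/2| ≤ 1/10 := by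
    have : ((q:ℝ) - t)/q = 1 - (t:ℝ)/q := by field_simp
    rw [this]
    exact abs_le.mpr ⟨by linarith, by linarith⟩
  calc (1/2) * (|(t:ℝ)/q - 1/2| + |((q:ℝ) - t)/q - 1/2|) ≤ (1/2)*(1/10 + 1/10) := by
        apply mul_le_mul_of_nonneg_left (add_le_add e1 e2) (by norm_num)
    _ ≤ 0.1 := by norm_num

theorem stmt_14 :
    ∃ n₀ : ℕ, ∀ n : ℕ, n₀ ≤ n →
      ∀ (F : Type) [Field F] [Fintype F] [DecidableEq F],
        200 * (n:ℝ) * Real.logb 2 (n:ℝ) < (Fintype.card F : ℝ) →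
        ∃ f : (Fin n → F) → Bool,
          ∀ a b : Fin n → F, b ≠ 0 →
            statDist (Finset.image (fun t : F => a + t • b) Finset.univ) f
              ≤ 0.1 := by
  refine ⟨2^100, fun n hn F _ _ _ hq => ?_⟩
  set q := Fintype.card F with hqdef
  have hq1 : 0 < q := Fintype.card_pos
  have hn1 : 1 ≤ n := le_trans (by norm_num) hn
  -- cardinality of the function space
  have hcard : Fintype.card (Fin n → F) = q^n := by
    rw [Fintype.card_fun, Fintype.card_fin]
  -- lines have q points
  have hline : ∀ a b : Fin n → F, b ≠ 0 →
      (Finset.image (fun t : F => a + t • b) Finset.univ).card = q := by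
    intro a b hb
    rw [Finset.card_image_of_injective _ ?_, Finset.card_univ]
    intro s t hst
    have hst' : s • b = t • b := by
      have := congrArg (fun v => v - a) hst
      simpa [add_sub_cancel_left] using this
    obtain ⟨i, hbi⟩ : ∃ i, b i ≠ 0 := by
      by_contra h
      push_neg at h
      exact hb (funext h)
    have hsi : s * b i = t * b i := congrFun hst' i
    exact mul_right_cancel₀ hbi hsi
  -- the key counting inequality
  have hqn : q ≤ q^n := Nat.le_self_pow (by omega) q
  have hmain : 2 * tailSum q * (q^n * q^n) < 2^q := by
    have h1 := tail_bound q
    have h2 := analytic n q hn (by rw [hqdef]; exact_mod_cast hq)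
    have hA : ((2 * tailSum q * (q^n * q^n) : ℕ):ℝ) < ((2^q : ℕ):ℝ) := by
      push_cast
      refine lt_of_pow_lt_pow_left₀ 5 (by positivity) ?_
      have h108 : (0:ℝ) < 108^q := by positivity
      refine lt_of_mul_lt_mul_right ?_ (le_of_lt h108)
      have e1 : (2*(tailSum q:ℝ)*((q:ℝ)^n*(q:ℝ)^n))^5
          = 32*((tailSum q:ℝ)^5)*((q:ℝ)^(10*n)) := by
        rw [show (10*n) = (n+n)*5 by ring, pow_mul, ← pow_add]
        ring
      rw [e1]
      calc 32*((tailSum q:ℝ)^5)*((q:ℝ)^(10*n)) * 108^q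
          = 32*((q:ℝ)^(10*n))*((tailSum q:ℝ)^5 * 108^q) := by ring
        _ ≤ 32*((q:ℝ)^(10*n))*(3125^q) := by
            apply mul_le_mul_of_nonneg_left h1 (by positivity)
        _ = (32*((q:ℝ)^(10*n)))*(3125^q) := by ring
        _ < ((3456/3125:ℝ)^q)*(3125^q) := by
            apply mul_lt_mul_of_pos_right h2 (by positivity)
        _ = (3456:ℝ)^q := by
            rw [div_pow, div_mul_cancel₀]
            positivity
        _ = ((2:ℝ)^q)^5 * 108^q := by
            rw [← pow_mul, mul_comm q 5, pow_mul, ← mul_pow]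
            norm_num
    exact_mod_cast hA
  -- bad sets
  set Bad : (Fin n → F) × (Fin n → F) → Finset ((Fin n → F) → Bool) := fun p =>
    Finset.univ.filter (fun f =>
      ¬(2*q ≤ 5*(((Finset.image (fun t : F => p.1 + t • p.2) Finset.univ).filter
          (fun x => f x = true)).card)
        ∧ 5*(((Finset.image (fun t : F => p.1 + t • p.2) Finset.univ).filter
          (fun x => f x = true)).card) ≤ 3*q)) with hBad
  set s : Finset ((Fin n → F) × (Fin n → F)) :=
    Finset.univ.filter (fun p => p.2 ≠ 0) with hs
  have hBadCard : ∀ p ∈ s, (Bad p).card ≤ 2 * tailSum q * 2^(q^n - q) := by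
    intro p hp
    rw [hs, Finset.mem_filter] at hp
    have hLcard := hline p.1 p.2 hp.2
    rw [hBad]
    rw [count_bad _ (fun t => ¬(2*q ≤ 5*t ∧ 5*t ≤ 3*q)), hLcard, hcard]
    exact Nat.mul_le_mul_right _ (bad_le_two_tail q)
  have hUnion : (s.biUnion Bad).card < Fintype.card ((Fin n → F) → Bool) := by
    have hcard2 : Fintype.card ((Fin n → F) → Bool) = 2^(q^n) := by
      rw [Fintype.card_fun, hcard, Fintype.card_bool]
    calc (s.biUnion Bad).card ≤ ∑ p ∈ s, (Bad p).card := Finset.card_biUnion_le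
      _ ≤ ∑ _p ∈ s, 2 * tailSum q * 2^(q^n - q) := Finset.sum_le_sum hBadCard
      _ = s.card * (2 * tailSum q * 2^(q^n - q)) := by rw [Finset.sum_const, smul_eq_mul]
      _ ≤ (q^n * q^n) * (2 * tailSum q * 2^(q^n - q)) := by
          apply Nat.mul_le_mul_right
          calc s.card ≤ (Finset.univ : Finset ((Fin n → F) × (Fin n → F))).card :=
                Finset.card_filter_le _ _
            _ = q^n * q^n := by
                rw [Finset.card_univ, Fintype.card_prod, hcard]
      _ = (2 * tailSum q * (q^n * q^n)) * 2^(q^n - q) := by ring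
      _ < 2^q * 2^(q^n - q) :=
          mul_lt_mul_of_pos_right hmain (by positivity)
      _ = 2^(q^n) := by rw [← pow_add]; congr 1; omega
      _ = Fintype.card ((Fin n → F) → Bool) := hcard2.symm
  obtain ⟨f, hf⟩ : ∃ f : (Fin n → F) → Bool, f ∉ s.biUnion Bad := by
    by_contra h
    push_neg at h
    have h2 : (Finset.univ : Finset ((Fin n → F) → Bool)) ⊆ s.biUnion Bad := fun f _ => h f
    have h3 := Finset.card_le_card h2
    rw [Finset.card_univ] at h3
    omega
  refine ⟨f, fun a b hb => ?_⟩
  have hmem : (a, b) ∈ s := by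
    rw [hs, Finset.mem_filter]
    exact ⟨Finset.mem_univ _, hb⟩
  have hnotbad : f ∉ Bad (a, b) := fun hfb => hf (Finset.mem_biUnion.mpr ⟨(a,b), hmem, hfb⟩)
  rw [hBad] at hnotbad
  simp only [Finset.mem_filter, Finset.mem_univ, true_and, not_not] at hnotbad
  exact statDist_le_of_count _ f q _ (hline a b hb) hq1 rfl hnotbad.1 hnotbad.2
end
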